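/- Let A ∈ ℂ^{n×n} and let B = [b₁, …, b_d] ∈ ℂ^{n×d} have full column rank, and suppose that A·b_i lies in the column span of B for every i = 1, …, d−1 (a graded Krylov basis). Let S ∈ ℂ^{s×n} be a subspace embedding with distortion ε ∈ (0,1) for the column span of [AB, B]. Let M⋆ = (B*B)⁻¹B*(AB) and M̂ = ((SB)*(SB))⁻¹(SB)*(S(AB)). Then the i-th columns of M̂ and M⋆ coincide for every i = 1, …, d−1; that is, M̂ and M⋆ can differ only in their final column. -/

import Mathlib

open Matrix

noncomputable def nrm2 {n : ℕ} (v : Fin n → ℂ) : ℝ :=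
  ‖(WithLp.equiv 2 (Fin n → ℂ)).symm v‖

/-!
If `A bᵢ = B c`, then the `i`-th column of `AB` is `B c` and that of `S(AB)` is `(SB) c`.
Any left inverse of `B`, in particular `B† = (B*B)⁻¹B*`, sends `B c` back to `c`, and so does
`(SB)†` with `(SB) c`: both Rayleigh–Ritz matrices have `c` as their `i`-th column. The subspace
embedding makes `SB` injective, so that `(SB)†` is indeed a left inverse of `SB`.
-/

open scoped ComplexOrder

namespace Matrix

variable {l m n p K : Type*}

theorem mul_col [Fintype m] [NonUnitalNonAssocSemiring K] (P : Matrix l m K) (N : Matrix m n K)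
    (i : n) : (P * N).col i = P *ᵥ N.col i := by
  ext j
  simp [mul_apply, mulVec, dotProduct]

theorem mulVec_mem_span_range_col [Fintype n] [CommSemiring K] (M : Matrix m n K) (x : n → K) :
    M *ᵥ x ∈ Submodule.span K (Set.range M.col) :=
  M.range_mulVecLin ▸ ⟨x, rfl⟩

theorem mulVec_injective_of_rank_eq_card [Fintype n] [Field K] {M : Matrix m n K}
    (h : M.rank = Fintype.card n) : Function.Injective M.mulVec := by
  rw [mulVec_injective_iff, linearIndependent_iff_card_eq_finrank_span, ← h,
    rank_eq_finrank_span_cols]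
  rfl

section Pinv

variable [Fintype m] [Fintype n] [DecidableEq n] [Field K] [StarRing K]

/-- The Moore–Penrose pseudoinverse `C†` when `C` has full column rank; otherwise `⁻¹` takes its
junk value and this is not `C†`. -/
noncomputable def pinv (C : Matrix m n K) : Matrix n m K :=
  (Cᴴ * C)⁻¹ * Cᴴ

variable [PartialOrder K] [StarOrderedRing K] {C : Matrix m n K}

theorem isUnit_conjTranspose_mul_self (hC : Function.Injective C.mulVec) : IsUnit (Cᴴ * C) := by
  rw [← mulVec_injective_iff_isUnit]
  refine (injective_iff_map_eq_zero (Cᴴ * C).mulVecLin).2 fun v hv => hC ?_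
  rwa [mulVec_zero, ← conjTranspose_mul_self_mulVec_eq_zero]

theorem pinv_mul_self (hC : Function.Injective C.mulVec) : C.pinv * C = 1 := by
  rw [pinv, Matrix.mul_assoc,
    nonsing_inv_mul _ ((isUnit_iff_isUnit_det _).mp (isUnit_conjTranspose_mul_self hC))]

theorem pinv_mul_col_of_col_eq (hC : Function.Injective C.mulVec) {N : Matrix m p K} {i : p}
    {c : n → K} (h : N.col i = C *ᵥ c) : (C.pinv * N).col i = c := by
  rw [mul_col, h, mulVec_mulVec, pinv_mul_self hC, one_mulVec]

end Pinv

end Matrix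

theorem nrm2_eq_zero {n : ℕ} {v : Fin n → ℂ} : nrm2 v = 0 ↔ v = 0 := by
  simp [nrm2]

theorem nrm2_nonneg {n : ℕ} (v : Fin n → ℂ) : 0 ≤ nrm2 v :=
  norm_nonneg _

def IsSubspaceEmbedding {s n : ℕ} (S : Matrix (Fin s) (Fin n) ℂ) (L : Submodule ℂ (Fin n → ℂ))
    (ε : ℝ) : Prop :=
  ∀ v ∈ L, (1 - ε) * nrm2 v ≤ nrm2 (S *ᵥ v) ∧ nrm2 (S *ᵥ v) ≤ (1 + ε) * nrm2 v

namespace IsSubspaceEmbedding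

variable {s n : ℕ} {S : Matrix (Fin s) (Fin n) ℂ} {L : Submodule ℂ (Fin n → ℂ)} {ε : ℝ}

theorem eq_zero_of_mulVec_eq_zero (hS : IsSubspaceEmbedding S L ε) (hε : ε < 1) {v : Fin n → ℂ}
    (hv : v ∈ L) (hSv : S *ᵥ v = 0) : v = 0 := by
  have h := (hS v hv).1
  rw [hSv, nrm2_eq_zero.2 rfl] at h
  exact nrm2_eq_zero.1 (le_antisymm (nonpos_of_mul_nonpos_right h (by linarith)) (nrm2_nonneg v))

theorem mul_mulVec_injective (hS : IsSubspaceEmbedding S L ε) (hε : ε < 1) {d : ℕ}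
    {B : Matrix (Fin n) (Fin d) ℂ} (hB : Function.Injective B.mulVec) (hBL : ∀ x, B *ᵥ x ∈ L) :
    Function.Injective (S * B).mulVec := by
  refine (injective_iff_map_eq_zero (S * B).mulVecLin).2 fun x hx => hB ?_
  rw [mulVec_zero]
  exact hS.eq_zero_of_mulVec_eq_zero hε (hBL x) (by rwa [mulVec_mulVec])

end IsSubspaceEmbedding

/-- For a graded Krylov basis, the sketched and classic Rayleigh–Ritz matrices
differ at most in their final column. -/
theorem sRR_krylov_columns_agree
    {n d s : ℕ} (A : Matrix (Fin n) (Fin n) ℂ) (B : Matrix (Fin n) (Fin d) ℂ)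
    (hB : B.rank = d)
    (hKrylov : ∀ i : Fin d, (i : ℕ) + 1 < d →
      A.mulVec (fun j => B j i) ∈ Submodule.span ℂ (Set.range Bᵀ))
    (S : Matrix (Fin s) (Fin n) ℂ) (ε : ℝ) (hε : ε ∈ Set.Ioo (0 : ℝ) 1)
    (hS : ∀ v ∈ Submodule.span ℂ (Set.range (A * B)ᵀ ∪ Set.range Bᵀ),
      (1 - ε) * nrm2 v ≤ nrm2 (S.mulVec v) ∧ nrm2 (S.mulVec v) ≤ (1 + ε) * nrm2 v) :
    ∀ i : Fin d, (i : ℕ) + 1 < d → ∀ j : Fin d,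
      (((S * B)ᴴ * (S * B))⁻¹ * (S * B)ᴴ * (S * (A * B))) j i =
        ((Bᴴ * B)⁻¹ * Bᴴ * (A * B)) j i := by
  intro i hi j
  have hBinj : Function.Injective B.mulVec :=
    mulVec_injective_of_rank_eq_card (by rwa [Fintype.card_fin])
  have hSBinj : Function.Injective (S * B).mulVec :=
    IsSubspaceEmbedding.mul_mulVec_injective hS hε.2 hBinj fun x =>
      Submodule.span_mono Set.subset_union_right (mulVec_mem_span_range_col B x)
  obtain ⟨c, hc⟩ : A *ᵥ B.col i ∈ LinearMap.range B.mulVecLin := by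
    rw [range_mulVecLin]
    exact hKrylov i hi
  have hABcol : (A * B).col i = B *ᵥ c := by rw [mul_col, ← hc, mulVecLin_apply]
  have hSABcol : (S * (A * B)).col i = (S * B) *ᵥ c := by rw [mul_col, hABcol, mulVec_mulVec]
  exact (congrFun (pinv_mul_col_of_col_eq hSBinj hSABcol) j).trans
    (congrFun (pinv_mul_col_of_col_eq hBinj hABcol) j).symm
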